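/- Let S_λ be a weighted shift on a directed tree T with weights λ = {λ_v}_{v∈V°} ⊆ ℂ, and for u ∈ V set ζ_u = (Σ_{v∈Chi(u)} |λ_v|²)^{1/2} ∈ [0, ∞]. Then a complex function f on V belongs to D(S_λ²) if and only if Σ_{u∈V} (1 + ζ_u² + Σ_{v∈Chi(u)} ζ_v² |λ_v|²) |f(u)|² < ∞, with the convention that 0·∞ = 0. -/

import Mathlib

/-!
The three summands of the weight are the squared norms of `f`, `Λ_T f` and `Λ_T² f`:
grouping the sum `Σ_{v ∈ V°} w_v |λ_v|² |f(par v)|²` according to the parent of `v` gives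
`Σ_v w_v |Λ_T f (v)|² = Σ_u (Σ_{v ∈ Chi(u)} w_v |λ_v|²) |f(u)|²`, and taking `w = 1`, then
`w = ζ²` (with `Λ_T f` in place of `f`), identifies `‖Λ_T f‖²` with `Σ_u ζ_u² |f(u)|²` and
`‖Λ_T² f‖²` with `Σ_u (Σ_{v ∈ Chi(u)} ζ_v² |λ_v|²) |f(u)|²`. All sums live in `[0, ∞]`.
-/

open scoped ENNReal NNReal Classical

noncomputable section

/-- A directed tree: a directed graph with nonempty vertex set in which each vertex has
at most one parent, there are no circuits, and the underlying undirected graph is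
connected and has no cycles (i.e. is a tree). -/
structure DirectedTree (V : Type) where
  edge : V → V → Prop
  nonempty : Nonempty V
  antisymm : ∀ u v : V, edge u v → ¬ edge v u
  parent_unique : ∀ u v w : V, edge u w → edge v w → u = v
  isTree : (SimpleGraph.fromRel edge).IsTree

namespace DirectedTree

variable {V : Type} (T : DirectedTree V)

/-- The set of children of a vertex. -/
def chi (u : V) : Set V := {v | T.edge u v}

/-- `v` has a parent. -/
def HasParent (v : V) : Prop := ∃ u, T.edge u v

/-- `V⁰`: the set of non-root vertices, i.e. the vertices possessing a parent. -/
def Vcirc : Set V := {v | T.HasParent v}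

/-- The tree is leafless if every vertex has a child. -/
def Leafless : Prop := ∀ u : V, (T.chi u).Nonempty

/-- The parent of a vertex (junk value if the vertex is a root). -/
def par (v : V) : V := if h : T.HasParent v then h.choose else T.nonempty.some

/-- The set of descendants of a vertex. -/
def desc (u : V) : Set V := {w | Relation.ReflTransGen T.edge u w}

/-- The formal weighted shift map `Λ_T` acting on all complex functions on `V`. -/
def Lam (lam : V → ℂ) (f : V → ℂ) : V → ℂ :=
  fun v => if T.HasParent v then lam v * f (T.par v) else 0

/-- The domain of the weighted shift `S_λ`. -/
def domain (lam : V → ℂ) : Set (lp (fun _ : V => ℂ) 2) :=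
  {f | Memℓp (T.Lam lam ⇑f) 2}

/-- The weighted shift `S_λ` (extended by `0` outside its domain). -/
def shift (lam : V → ℂ) (f : lp (fun _ : V => ℂ) 2) : lp (fun _ : V => ℂ) 2 :=
  if h : f ∈ T.domain lam then (⟨T.Lam lam ⇑f, h⟩ : lp (fun _ : V => ℂ) 2) else 0

/-- The domain of `S_λ²`. -/
def squareDomain (lam : V → ℂ) : Set (lp (fun _ : V => ℂ) 2) :=
  {f | f ∈ T.domain lam ∧ T.shift lam f ∈ T.domain lam}

/-- The domain of the adjoint `S_λ*`. -/
def adjDomain (lam : V → ℂ) : Set (lp (fun _ : V => ℂ) 2) :=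
  {g | ∃ h : lp (fun _ : V => ℂ) 2,
    ∀ f ∈ T.domain lam, (inner ℂ (T.shift lam f) g : ℂ) = inner ℂ f h}

/-- `S_λ` is hyponormal: it is densely defined, `D(S_λ) ⊆ D(S_λ*)` and
`‖S_λ* f‖ ≤ ‖S_λ f‖` for every `f ∈ D(S_λ)` (the adjoint value at `f` being any vector
`h` satisfying `⟪S_λ g, f⟫ = ⟪g, h⟫` for all `g ∈ D(S_λ)`; it is unique by density). -/
def IsHyponormal (lam : V → ℂ) : Prop :=
  Dense (T.domain lam) ∧ T.domain lam ⊆ T.adjDomain lam ∧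
    ∀ f ∈ T.domain lam, ∀ h : lp (fun _ : V => ℂ) 2,
      (∀ g ∈ T.domain lam, (inner ℂ (T.shift lam g) f : ℂ) = inner ℂ g h) →
        ‖h‖ ≤ ‖T.shift lam f‖

/-- `ζ_u = (Σ_{v ∈ Chi(u)} |λ_v|²)^{1/2} ∈ [0,∞]`. -/
def zeta (lam : V → ℂ) (u : V) : ℝ≥0∞ :=
  (∑' v : T.chi u, ((‖lam (v : V)‖₊ : ℝ≥0∞)) ^ 2) ^ (1/2 : ℝ)

end DirectedTree

theorem memℓp_natCast_iff_tsum_nnnorm_pow_lt_top {α : Type*} {E : α → Type*}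
    [∀ i, NormedAddCommGroup (E i)] {n : ℕ} (hn : n ≠ 0) (g : ∀ i, E i) :
    Memℓp g n ↔ ∑' i, (‖g i‖₊ : ℝ≥0∞) ^ n < ⊤ := by
  rw [memℓp_gen_iff (by simpa using Nat.pos_of_ne_zero hn), lt_top_iff_ne_top]
  simp_rw [ENNReal.toReal_natCast, Real.rpow_natCast, ← ENNReal.coe_pow,
    ENNReal.tsum_coe_ne_top_iff_summable, ← NNReal.summable_coe, NNReal.coe_pow, coe_nnnorm]

namespace DirectedTree

variable {V : Type} (T : DirectedTree V)

lemma edge_par {v : V} (h : T.HasParent v) : T.edge (T.par v) v := by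
  rw [par, dif_pos h]
  exact h.choose_spec

lemma par_eq_of_edge {u v : V} (h : T.edge u v) : T.par v = u :=
  T.parent_unique _ _ _ (T.edge_par ⟨u, h⟩) h

def sigmaChiEquivVcirc : (Σ u : V, T.chi u) ≃ T.Vcirc where
  toFun p := ⟨p.2, p.1, p.2.2⟩
  invFun v := ⟨T.par v, v, T.edge_par v.2⟩
  left_inv := by
    rintro ⟨u, v, huv⟩
    obtain rfl := T.par_eq_of_edge huv
    rfl
  right_inv _ := rfl

lemma tsum_Vcirc_eq_tsum_tsum_chi (g : V → ℝ≥0∞) :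
    ∑' v : T.Vcirc, g v = ∑' u, ∑' v : T.chi u, g v := by
  rw [← ENNReal.tsum_sigma fun u (v : T.chi u) => g v]
  exact (T.sigmaChiEquivVcirc.tsum_eq fun v : T.Vcirc => g v).symm

lemma zeta_sq (lam : V → ℂ) (u : V) :
    T.zeta lam u ^ 2 = ∑' v : T.chi u, (‖lam v‖₊ : ℝ≥0∞) ^ 2 := by
  rw [zeta, ← ENNReal.rpow_natCast, ← ENNReal.rpow_mul]
  norm_num

variable (lam : V → ℂ) (f : V → ℂ)

lemma nnnorm_Lam_sq (v : V) :
    (‖T.Lam lam f v‖₊ : ℝ≥0∞) ^ 2 =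
      T.Vcirc.indicator (fun v => (‖lam v‖₊ : ℝ≥0∞) ^ 2 * (‖f (T.par v)‖₊ : ℝ≥0∞) ^ 2) v := by
  by_cases h : T.HasParent v
  · rw [Lam, if_pos h, Set.indicator_of_mem (show v ∈ T.Vcirc from h), nnnorm_mul,
      ENNReal.coe_mul, mul_pow]
  · rw [Lam, if_neg h, Set.indicator_of_notMem (show v ∉ T.Vcirc from h)]
    simp

lemma tsum_mul_nnnorm_Lam_sq (w : V → ℝ≥0∞) :
    ∑' v, w v * (‖T.Lam lam f v‖₊ : ℝ≥0∞) ^ 2 =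
      ∑' u, (∑' v : T.chi u, w v * (‖lam v‖₊ : ℝ≥0∞) ^ 2) * (‖f u‖₊ : ℝ≥0∞) ^ 2 := by
  simp_rw [T.nnnorm_Lam_sq, ← Set.indicator_mul_right, ← mul_assoc]
  rw [← tsum_subtype, T.tsum_Vcirc_eq_tsum_tsum_chi
    fun v => w v * (‖lam v‖₊ : ℝ≥0∞) ^ 2 * (‖f (T.par v)‖₊ : ℝ≥0∞) ^ 2]
  refine tsum_congr fun u => ?_
  rw [← ENNReal.tsum_mul_right]
  refine tsum_congr fun v => ?_
  rw [T.par_eq_of_edge v.2]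

lemma tsum_nnnorm_Lam_sq :
    ∑' v, (‖T.Lam lam f v‖₊ : ℝ≥0∞) ^ 2 = ∑' u, T.zeta lam u ^ 2 * (‖f u‖₊ : ℝ≥0∞) ^ 2 := by
  simpa only [one_mul, ← zeta_sq] using T.tsum_mul_nnnorm_Lam_sq lam f fun _ => 1

end DirectedTree

/-- (†): a complex function `f` on `V` belongs to `D(S_λ²)` iff
`Σ_{u∈V} (1 + ζ_u² + Σ_{v∈Chi(u)} ζ_v² |λ_v|²) |f(u)|² < ∞`. -/
theorem stmt4 {V : Type} (T : DirectedTree V) (lam : V → ℂ) (f : V → ℂ) :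
    (Memℓp f 2 ∧ Memℓp (T.Lam lam f) 2 ∧ Memℓp (T.Lam lam (T.Lam lam f)) 2) ↔
      ∑' u : V, (1 + T.zeta lam u ^ 2 +
          ∑' v : T.chi u, T.zeta lam (v:V) ^ 2 * (‖lam (v:V)‖₊ : ℝ≥0∞) ^ 2) *
        (‖f u‖₊ : ℝ≥0∞) ^ 2 < ⊤ := by
  have memℓp_two_iff (g : V → ℂ) := memℓp_natCast_iff_tsum_nnnorm_pow_lt_top two_ne_zero g
  simp only [Nat.cast_ofNat] at memℓp_two_iff
  rw [memℓp_two_iff, memℓp_two_iff, memℓp_two_iff, T.tsum_nnnorm_Lam_sq,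
    T.tsum_nnnorm_Lam_sq, T.tsum_mul_nnnorm_Lam_sq]
  simp only [add_mul, one_mul, ENNReal.tsum_add, ENNReal.add_lt_top, and_assoc]
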